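/- There is an L_OR formula ψ(x) such that PA ⊢ ∀x ψ(x), but no inductive formula φ(x) satisfies PA⁻ ⊢ ∀x(φ(x) → ψ(x)). -/

import Mathlib

open FirstOrder Language

/-! ### The language `L_OR = {0, 1, +, ×, <}` of ordered rings -/

/-- Function symbols of the language of ordered rings. -/
inductive LorFunc : ℕ → Type
  | zero : LorFunc 0
  | one : LorFunc 0
  | add : LorFunc 2
  | mul : LorFunc 2

/-- Relation symbols of the language of ordered rings: just `<`. -/
inductive LorRel : ℕ → Type
  | lt : LorRel 2

/-- The first-order language of ordered rings. -/
def Lor : Language := ⟨LorFunc, LorRel⟩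

/-- The term `0`. -/
def zeroT {α : Type} : Lor.Term α := Constants.term LorFunc.zero

/-- The term `1`. -/
def oneT {α : Type} : Lor.Term α := Constants.term LorFunc.one

/-- Addition of terms. -/
def addT {α : Type} (t u : Lor.Term α) : Lor.Term α := Functions.apply₂ LorFunc.add t u

/-- Multiplication of terms. -/
def mulT {α : Type} (t u : Lor.Term α) : Lor.Term α := Functions.apply₂ LorFunc.mul t u

/-- The term `2`, an abbreviation for `1 + 1`. -/
def twoT {α : Type} : Lor.Term α := addT oneT oneT

/-- The numeral `k`, i.e. the closed term `(⋯((0+1)+1)+⋯+1)` with `k` ones. -/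
def numT {α : Type} : ℕ → Lor.Term α
  | 0 => zeroT
  | n + 1 => addT (numT n) oneT

/-- The bounded formula `t < u`. -/
def ltBF {α : Type} {n : ℕ} (t u : Lor.Term (α ⊕ Fin n)) : Lor.BoundedFormula α n :=
  Relations.boundedFormula₂ LorRel.lt t u

/-- The formula `t < u`. -/
def ltFml {α : Type} (t u : Lor.Term α) : Lor.Formula α :=
  Relations.formula₂ LorRel.lt t u

/-- The formula `t ≤ u`, an abbreviation for `t < u ∨ t = u`. -/
def leFml {α : Type} (t u : Lor.Term α) : Lor.Formula α :=
  ltFml t u ⊔ Term.equal t u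

/-! ### The base theory `PA⁻` -/

/-- `PA⁻`, the theory of non-negative parts of discretely ordered rings. -/
def PAminus : Lor.Theory :=
  { -- (P1) associativity of +
    ∀' ∀' ∀' (addT (addT &0 &1) &2 =' addT &0 (addT &1 &2)),
    -- (P2) commutativity of +
    ∀' ∀' (addT &0 &1 =' addT &1 &0),
    -- (P3) associativity of ×
    ∀' ∀' ∀' (mulT (mulT &0 &1) &2 =' mulT &0 (mulT &1 &2)),
    -- (P4) commutativity of ×
    ∀' ∀' (mulT &0 &1 =' mulT &1 &0),
    -- (P5) distributivity
    ∀' ∀' ∀' (mulT &0 (addT &1 &2) =' addT (mulT &0 &1) (mulT &0 &2)),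
    -- (P6) x + 0 = x
    ∀' (addT &0 zeroT =' &0),
    -- (P7) x × 0 = 0
    ∀' (mulT &0 zeroT =' zeroT),
    -- (P8) x × 1 = x
    ∀' (mulT &0 oneT =' &0),
    -- (P9) transitivity of <
    ∀' ∀' ∀' (ltBF &0 &1 ⊓ ltBF &1 &2 ⟹ ltBF &0 &2),
    -- (P10) irreflexivity of <
    ∀' ∼(ltBF &0 &0),
    -- (P11) linearity of <
    ∀' ∀' (ltBF &0 &1 ⊔ &0 =' &1 ⊔ ltBF &1 &0),
    -- (P12) x < y → x + z < y + z
    ∀' ∀' ∀' (ltBF &0 &1 ⟹ ltBF (addT &0 &2) (addT &1 &2)),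
    -- (P13) z ≠ 0 ∧ x < y → x × z < y × z
    ∀' ∀' ∀' (∼(&2 =' zeroT) ⊓ ltBF &0 &1 ⟹ ltBF (mulT &0 &2) (mulT &1 &2)),
    -- (P14) x < y ↔ ∃z ((x + z) + 1 = y)
    ∀' ∀' (ltBF &0 &1 ⇔ ∃' (addT (addT &0 &2) oneT =' &1)),
    -- (P15) 0 < 1 ∧ (x > 0 → x ≥ 1)
    ltBF zeroT oneT ⊓ ∀' (ltBF zeroT &0 ⟹ ltBF oneT &0 ⊔ oneT =' &0),
    -- (P16) x ≥ 0
    ∀' (ltBF zeroT &0 ⊔ zeroT =' &0) }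

/-! ### Formulas `θ(x, z̄)` with a distinguished variable `x` and parameters `z̄`

A formula `θ(x, z̄)` with `m` parameters `z̄` and a distinguished induction
variable `x` is represented as `θ : Lor.Formula (Fin m ⊕ Fin 1)`, where the
`Fin m` component gives the parameters and the `Fin 1` component gives `x`. -/

/-- The distinguished variable `x` as a term. -/
def xT {m : ℕ} : Lor.Term (Fin m ⊕ Fin 1) := Term.var (Sum.inr 0)

/-- `θ(t, z̄)`, where `t` is a term possibly involving `x` and the parameters. -/
def substX {m : ℕ} (θ : Lor.Formula (Fin m ⊕ Fin 1)) (t : Lor.Term (Fin m ⊕ Fin 1)) :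
    Lor.Formula (Fin m ⊕ Fin 1) :=
  θ.subst (Sum.elim (fun i => Term.var (Sum.inl i)) fun _ => t)

/-- `θ(t, z̄)` where `t` is a term in the parameters only. -/
def substP {m : ℕ} (θ : Lor.Formula (Fin m ⊕ Fin 1)) (t : Lor.Term (Fin m)) :
    Lor.Formula (Fin m) :=
  θ.subst (Sum.elim (fun i => Term.var i) fun _ => t)

/-- `∀x θ(x, z̄)`. -/
noncomputable def allX {m : ℕ} (θ : Lor.Formula (Fin m ⊕ Fin 1)) : Lor.Formula (Fin m) :=
  Formula.iAlls (Fin 1) θ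

/-- The universal closure of a formula, as a sentence. -/
noncomputable def closeAll {α : Type} [Finite α] (φ : Lor.Formula α) : Lor.Sentence :=
  Formula.iAlls α (φ.relabel (Sum.inr : α → Empty ⊕ α))

/-- `∀x' < x, θ(x', z̄)`, a formula with free variable `x` (and parameters). -/
noncomputable def allLtX {m : ℕ} (θ : Lor.Formula (Fin m ⊕ Fin 1)) :
    Lor.Formula (Fin m ⊕ Fin 1) :=
  Formula.iAlls (Fin 1)
    (ltFml (Term.var (Sum.inr 0)) (Term.var (Sum.inl (Sum.inr 0))) ⟹
      θ.relabel (Sum.elim (fun i => Sum.inl (Sum.inl i)) fun _ => Sum.inr 0))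

/-- `∀x' ≤ x, θ(x', z̄)`, a formula with free variable `x` (and parameters). -/
noncomputable def allLeX {m : ℕ} (θ : Lor.Formula (Fin m ⊕ Fin 1)) :
    Lor.Formula (Fin m ⊕ Fin 1) :=
  Formula.iAlls (Fin 1)
    (leFml (Term.var (Sum.inr 0)) (Term.var (Sum.inl (Sum.inr 0))) ⟹
      θ.relabel (Sum.elim (fun i => Sum.inl (Sum.inl i)) fun _ => Sum.inr 0))

/-- The conjunction `⋀_{k<j} θ(k, z̄)`. -/
def conjNum {m : ℕ} (θ : Lor.Formula (Fin m ⊕ Fin 1)) : ℕ → Lor.Formula (Fin m)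
  | 0 => ⊤
  | j + 1 => conjNum θ j ⊓ substP θ (numT j)

/-- The conjunction `⋀_{k<j} θ(x+k, z̄)`. -/
def conjShift {m : ℕ} (θ : Lor.Formula (Fin m ⊕ Fin 1)) : ℕ → Lor.Formula (Fin m ⊕ Fin 1)
  | 0 => ⊤
  | j + 1 => conjShift θ j ⊓ substX θ (addT xT (numT j))

/-! ### Induction axioms -/

/-- The induction axiom `I_x θ`:
`∀z̄( θ(0,z̄) ∧ ∀x(θ(x,z̄) → θ(x+1,z̄)) → ∀x θ(x,z̄) )`. -/
noncomputable def indAx {m : ℕ} (θ : Lor.Formula (Fin m ⊕ Fin 1)) : Lor.Sentence :=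
  closeAll ((substP θ zeroT ⊓ allX (θ ⟹ substX θ (addT xT oneT))) ⟹ allX θ)

/-- The `<`-induction axiom `I^<_x θ`:
`∀z̄( ∀y(∀x<y θ(x,z̄) → θ(y,z̄)) → ∀x θ(x,z̄) )`. -/
noncomputable def indLtAx {m : ℕ} (θ : Lor.Formula (Fin m ⊕ Fin 1)) : Lor.Sentence :=
  closeAll (allX (allLtX θ ⟹ θ) ⟹ allX θ)

/-- The `(n+1)`-step induction axiom `I^{(n+1)-step}_x θ`:
`∀z̄( ⋀_{k<n+1} θ(k,z̄) ∧ ∀x(θ(x,z̄) → θ(x+n+1,z̄)) → ∀x θ(x,z̄) )`. -/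
noncomputable def indStepAx {m : ℕ} (n : ℕ) (θ : Lor.Formula (Fin m ⊕ Fin 1)) : Lor.Sentence :=
  closeAll ((conjNum θ (n + 1) ⊓ allX (θ ⟹ substX θ (addT xT (numT (n + 1))))) ⟹ allX θ)

/-- The `(n+1)`-induction axiom `I^{n+1}_x θ`:
`∀z̄( ⋀_{k<n+1} θ(k,z̄) ∧ ∀x(⋀_{k<n+1} θ(x+k,z̄) → θ(x+n+1,z̄)) → ∀x θ(x,z̄) )`. -/
noncomputable def indKAx {m : ℕ} (n : ℕ) (θ : Lor.Formula (Fin m ⊕ Fin 1)) : Lor.Sentence :=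
  closeAll ((conjNum θ (n + 1) ⊓ allX (conjShift θ (n + 1) ⟹ substX θ (addT xT (numT (n + 1))))) ⟹
    allX θ)

/-- The polynomial induction axiom `I^p_x θ`:
`∀z̄( θ(0,z̄) ∧ ∀x(θ(x,z̄) → θ(2x,z̄) ∧ θ(2x+1,z̄)) → ∀x θ(x,z̄) )`, where `2x` is `(1+1)×x`. -/
noncomputable def indPAx {m : ℕ} (θ : Lor.Formula (Fin m ⊕ Fin 1)) : Lor.Sentence :=
  closeAll ((substP θ zeroT ⊓
      allX (θ ⟹ substX θ (mulT twoT xT) ⊓ substX θ (addT (mulT twoT xT) oneT))) ⟹ allX θ)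

/-! ### Theories -/

/-- Peano arithmetic: `PA⁻` plus induction for all `L_OR` formulas. -/
noncomputable def PA : Lor.Theory :=
  PAminus ∪ {σ | ∃ (m : ℕ) (θ : Lor.Formula (Fin m ⊕ Fin 1)), σ = indAx θ}

/-- `IOpen`: `PA⁻` plus induction for all quantifier-free `L_OR` formulas. -/
noncomputable def IOpen : Lor.Theory :=
  PAminus ∪ {σ | ∃ (m : ℕ) (θ : Lor.Formula (Fin m ⊕ Fin 1)), θ.IsQF ∧ σ = indAx θ}

/-! ### Notions of inductiveness

A formula `φ(x)` with exactly one free variable `x` is represented as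
`φ : Lor.Formula (Fin 0 ⊕ Fin 1)` (no parameters). -/

/-- Formulas `φ(x)` with exactly one free variable `x`. -/
abbrev OneVarFormula : Type := Lor.Formula (Fin 0 ⊕ Fin 1)

/-- The sentence `∀x φ(x)`. -/
noncomputable def allS (φ : OneVarFormula) : Lor.Sentence := closeAll (allX φ)

/-- `φ(x)` is inductive: `PA⁻ ⊢ φ(0)` and `PA⁻ ⊢ ∀x(φ(x) → φ(x+1))`. -/
noncomputable def IsInductive (φ : OneVarFormula) : Prop :=
  PAminus ⊨ᵇ closeAll (substP φ zeroT) ∧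
    PAminus ⊨ᵇ closeAll (allX (φ ⟹ substX φ (addT xT oneT)))

/-- `φ(x)` is `<`-inductive: `PA⁻ ⊢ ∀y(∀x<y φ(x) → φ(y))`. -/
noncomputable def IsLtInductive (φ : OneVarFormula) : Prop :=
  PAminus ⊨ᵇ closeAll (allX (allLtX φ ⟹ φ))

/-- `φ(x)` is `(n+1)`-step inductive:
`PA⁻ ⊢ ⋀_{k<n+1} φ(k) ∧ ∀x(φ(x) → φ(x+n+1))`. -/
noncomputable def IsStepInductive (n : ℕ) (φ : OneVarFormula) : Prop :=
  PAminus ⊨ᵇ closeAll (conjNum φ (n + 1) ⊓ allX (φ ⟹ substX φ (addT xT (numT (n + 1)))))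

/-- `φ(x)` is `(n+1)`-inductive:
`PA⁻ ⊢ ⋀_{k<n+1} φ(k) ∧ ∀x(⋀_{k<n+1} φ(x+k) → φ(x+n+1))`. -/
noncomputable def IsKInductive (n : ℕ) (φ : OneVarFormula) : Prop :=
  PAminus ⊨ᵇ
    closeAll (conjNum φ (n + 1) ⊓ allX (conjShift φ (n + 1) ⟹ substX φ (addT xT (numT (n + 1)))))

/-- `φ(x)` is p-inductive (polynomially inductive):
`PA⁻ ⊢ φ(0) ∧ ∀x(φ(x) → φ(2x) ∧ φ(2x+1))`. -/
noncomputable def IsPInductive (φ : OneVarFormula) : Prop :=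
  PAminus ⊨ᵇ closeAll (substP φ zeroT ⊓
    allX (φ ⟹ substX φ (mulT twoT xT) ⊓ substX φ (addT (mulT twoT xT) oneT)))

/-! ### Cuts -/

/-- `φ(x)` is a cut: an inductive formula with `PA⁻ ⊢ ∀x∀y(x<y ∧ φ(y) → φ(x))`. -/
noncomputable def IsCut (φ : OneVarFormula) : Prop :=
  IsInductive φ ∧
    PAminus ⊨ᵇ closeAll
      (ltFml (Term.var (Sum.inr 0) : Lor.Term (Fin 0 ⊕ Fin 2)) (Term.var (Sum.inr 1)) ⊓
          φ.relabel (Sum.elim (fun i => Sum.inl i) fun _ => Sum.inr 1) ⟹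
        φ.relabel (Sum.elim (fun i => Sum.inl i) fun _ => Sum.inr 0))

/-- `φ(x)` is an a-cut: a cut with `PA⁻ ⊢ ∀x(φ(x) → φ(x+x))`. -/
noncomputable def IsACut (φ : OneVarFormula) : Prop :=
  IsCut φ ∧ PAminus ⊨ᵇ closeAll (allX (φ ⟹ substX φ (addT xT xT)))

/-- `φ(x)` is an am-cut: an a-cut with `PA⁻ ⊢ ∀x(φ(x) → φ(x×x))`. -/
noncomputable def IsAMCut (φ : OneVarFormula) : Prop :=
  IsACut φ ∧ PAminus ⊨ᵇ closeAll (allX (φ ⟹ substX φ (mulT xT xT)))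

/-!
Take `ψ := ∀z (z is even or odd)`, with `x` not occurring in it. `PA` proves `ψ` by induction
on `z`. If `φ` is inductive and `PA⁻ ⊢ ∀x (φ(x) → ψ)`, then `PA⁻ ⊢ φ(0)` already gives `PA⁻ ⊢ ψ`.
But `ψ` fails in the non-negative part of `ℤ[X]`, ordered so that `X` is infinitely large:
comparing coefficients of `X`, it is neither `y + y` nor `y + y + 1`.
-/

section Interpretation

variable {M : Type*} [Lor.Structure M]

variable (M) in
def mzero : M := Structure.funMap (L := Lor) LorFunc.zero default
variable (M) in
def mone : M := Structure.funMap (L := Lor) LorFunc.one default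
def madd (a b : M) : M := Structure.funMap (L := Lor) LorFunc.add ![a, b]
def mmul (a b : M) : M := Structure.funMap (L := Lor) LorFunc.mul ![a, b]
def mlt (a b : M) : Prop := Structure.RelMap (L := Lor) LorRel.lt ![a, b]

@[simp] lemma realize_zeroT {α : Type} (v : α → M) : (zeroT : Lor.Term α).realize v = mzero M :=
  Term.realize_constants
@[simp] lemma realize_oneT {α : Type} (v : α → M) : (oneT : Lor.Term α).realize v = mone M :=
  Term.realize_constants
@[simp] lemma realize_addT {α : Type} (t u : Lor.Term α) (v : α → M) :
    (addT t u).realize v = madd (t.realize v) (u.realize v) :=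
  Term.realize_functions_apply₂
@[simp] lemma realize_mulT {α : Type} (t u : Lor.Term α) (v : α → M) :
    (mulT t u).realize v = mmul (t.realize v) (u.realize v) :=
  Term.realize_functions_apply₂
@[simp] lemma realize_ltBF {α : Type} {n : ℕ} (t u : Lor.Term (α ⊕ Fin n)) (v : α → M)
    (xs : Fin n → M) :
    (ltBF t u).Realize v xs ↔ mlt (t.realize (Sum.elim v xs)) (u.realize (Sum.elim v xs)) :=
  BoundedFormula.realize_rel₂

end Interpretation

section Semantics

variable {M : Type*} [Lor.Structure M]

lemma realize_closeAll {α : Type} [Finite α] (φ : Lor.Formula α) (v : Empty → M)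
    (xs : Fin 0 → M) : BoundedFormula.Realize (closeAll φ) v xs ↔ ∀ w : α → M, φ.Realize w := by
  simp only [closeAll, BoundedFormula.realize_iAlls, Formula.realize_relabel]
  rfl

lemma realize_allX {m : ℕ} (θ : Lor.Formula (Fin m ⊕ Fin 1)) (v : Fin m → M) :
    (allX θ).Realize v ↔ ∀ x : M, θ.Realize (Sum.elim v fun _ => x) := by
  rw [allX, Formula.realize_iAlls]
  refine ⟨fun h x => h fun _ => x, fun h w => ?_⟩
  rw [show w = fun _ => w 0 from funext fun i => congrArg w (Subsingleton.elim i 0)]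
  exact h (w 0)

lemma realize_substP {m : ℕ} (θ : Lor.Formula (Fin m ⊕ Fin 1)) (t : Lor.Term (Fin m))
    (v : Fin m → M) : (substP θ t).Realize v ↔ θ.Realize (Sum.elim v fun _ => t.realize v) := by
  rw [substP, Formula.Realize, BoundedFormula.realize_subst]
  refine iff_of_eq (congrArg (BoundedFormula.Realize θ · default) ?_)
  ext (i | i) <;> rfl

lemma realize_substX {m : ℕ} (θ : Lor.Formula (Fin m ⊕ Fin 1)) (t : Lor.Term (Fin m ⊕ Fin 1))
    (v : Fin m ⊕ Fin 1 → M) :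
    (substX θ t).Realize v ↔ θ.Realize (Sum.elim (v ∘ Sum.inl) fun _ => t.realize v) := by
  rw [substX, Formula.Realize, BoundedFormula.realize_subst]
  refine iff_of_eq (congrArg (BoundedFormula.Realize θ · default) ?_)
  ext (i | i) <;> rfl

end Semantics

theorem models_closeAll_substP_of_imp {T : Lor.Theory} {m : ℕ}
    {φ ψ : Lor.Formula (Fin m ⊕ Fin 1)} {t : Lor.Term (Fin m)}
    (hφ : T ⊨ᵇ closeAll (substP φ t)) (h : T ⊨ᵇ closeAll (allX (φ ⟹ ψ))) :
    T ⊨ᵇ closeAll (substP ψ t) := by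
  intro M v xs
  refine (realize_closeAll _ v xs).2 fun w => (realize_substP _ _ _).2 ?_
  exact (realize_allX _ w).1 ((realize_closeAll _ v xs).1 (h M v xs) w) _
    ((realize_substP _ _ _).1 ((realize_closeAll _ v xs).1 (hφ M v xs) w))

section CanonicalStructure

variable (M : Type*) [Zero M] [One M] [Add M] [Mul M] [LT M]

abbrev canonicalLorStructure : Lor.Structure M where
  funMap {_} f v :=
    match f with
    | .zero => 0
    | .one => 1
    | .add => v 0 + v 1
    | .mul => v 0 * v 1
  RelMap {_} r v :=
    match r with
    | .lt => v 0 < v 1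

attribute [local instance] canonicalLorStructure

@[simp] lemma mzero_eq_zero : mzero M = 0 := rfl
@[simp] lemma mone_eq_one : mone M = 1 := rfl
@[simp] lemma madd_eq_add (a b : M) : madd a b = a + b := rfl
@[simp] lemma mmul_eq_mul (a b : M) : mmul a b = a * b := rfl
@[simp] lemma mlt_iff_lt (a b : M) : mlt a b ↔ a < b := Iff.rfl

end CanonicalStructure

section

attribute [local instance] canonicalLorStructure

theorem model_PAminus_of_one_le_of_pos (M : Type*) [CommSemiring M] [LinearOrder M]
    [IsStrictOrderedRing M] [CanonicallyOrderedAdd M] (one_le_of_pos : ∀ x : M, 0 < x → 1 ≤ x) :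
    M ⊨ PAminus := by
  rw [Theory.model_iff]
  intro σ hσ
  simp only [PAminus, Set.mem_insert_iff, Set.mem_singleton_iff] at hσ
  rcases hσ with rfl|rfl|rfl|rfl|rfl|rfl|rfl|rfl|rfl|rfl|rfl|rfl|rfl|rfl|rfl|rfl <;>
    simp [Sentence.Realize, Formula.Realize, Fin.snoc]
  · exact add_assoc
  · exact add_comm
  · exact mul_assoc
  · exact mul_comm
  · exact mul_add
  · exact fun _ _ _ => lt_trans
  · exact fun a b => by rcases lt_trichotomy a b with h | h | h <;> simp [h]
  · exact fun _ _ c hc h => mul_lt_mul_of_pos_right h (pos_iff_ne_zero.2 hc)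
  · refine fun a b => ⟨fun h => ?_, ?_⟩
    · obtain ⟨d, rfl⟩ := exists_add_of_le h.le
      obtain ⟨e, rfl⟩ := exists_add_of_le (one_le_of_pos d (by simpa using h))
      exact ⟨e, by rw [add_comm 1 e, add_assoc]⟩
    · rintro ⟨c, rfl⟩
      exact (lt_add_one a).trans_le (by simp)
  · exact fun a h => (one_le_of_pos a h).lt_or_eq
  · exact fun _ => zero_le.lt_or_eq

end

namespace Polynomial

lemma leadingCoeff_add_nonneg {R : Type*} [Semiring R] [PartialOrder R] [IsOrderedAddMonoid R]
    {p q : Polynomial R} (hp : 0 ≤ p.leadingCoeff) (hq : 0 ≤ q.leadingCoeff) :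
    0 ≤ (p + q).leadingCoeff := by
  rcases lt_trichotomy p.degree q.degree with h | h | h
  · rwa [leadingCoeff_add_of_degree_lt h]
  · by_cases h0 : p.leadingCoeff + q.leadingCoeff = 0
    · obtain ⟨hp0, hq0⟩ := (add_eq_zero_iff_of_nonneg hp hq).1 h0
      simp [leadingCoeff_eq_zero.1 hp0, leadingCoeff_eq_zero.1 hq0]
    · rw [leadingCoeff_add_of_degree_eq h h0]
      exact add_nonneg hp hq
  · rwa [leadingCoeff_add_of_degree_lt' h]

lemma leadingCoeff_sub_one_nonneg {R : Type*} [Ring R] [PartialOrder R] [IsOrderedRing R]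
    {p : Polynomial R} (hp : 1 ≤ p.leadingCoeff) : 0 ≤ (p - 1).leadingCoeff := by
  rcases le_or_gt p.degree 0 with h | h
  · rw [eq_C_of_degree_le_zero h, leadingCoeff_C] at hp
    rw [eq_C_of_degree_le_zero h, ← C_1, ← C_sub, leadingCoeff_C]
    exact sub_nonneg.2 hp
  · rw [leadingCoeff_sub_of_degree_lt (degree_one_le.trans_lt h)]
    exact zero_le_one.trans hp

end Polynomial

/-- `ℤ[X]` ordered by the sign of the leading coefficient, so that `X` exceeds every integer. -/
def IntPolyInf : Type := Polynomial ℤ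

noncomputable section
namespace IntPolyInf

instance : CommRing IntPolyInf := inferInstanceAs (CommRing (Polynomial ℤ))
instance : IsDomain IntPolyInf := inferInstanceAs (IsDomain (Polynomial ℤ))

def toPoly : IntPolyInf ≃+* Polynomial ℤ := RingEquiv.refl _

def nonnegCone : RingCone IntPolyInf where
  carrier := {p | 0 ≤ (toPoly p).leadingCoeff}
  add_mem' {p q} hp hq := by simpa using Polynomial.leadingCoeff_add_nonneg hp hq
  mul_mem' {p q} hp hq := by simpa [Polynomial.leadingCoeff_mul] using mul_nonneg hp hq
  zero_mem' := by simp
  one_mem' := by simp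
  eq_zero_of_mem_of_neg_mem' {p} hp hnp := by
    simp only [Set.mem_ofPred_eq, map_neg, Polynomial.leadingCoeff_neg, Left.nonneg_neg_iff]
      at hp hnp
    exact toPoly.map_eq_zero_iff.1 (Polynomial.leadingCoeff_eq_zero.1 (le_antisymm hnp hp))

instance : HasMemOrNegMem nonnegCone where
  mem_or_neg_mem p := by
    simpa [nonnegCone] using le_total 0 (toPoly p).leadingCoeff

instance : LinearOrder IntPolyInf :=
  open Classical in LinearOrder.mkOfAddGroupCone nonnegCone

instance : IsOrderedRing IntPolyInf := IsOrderedRing.mkOfCone nonnegCone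

lemma nonneg_iff {p : IntPolyInf} : 0 ≤ p ↔ 0 ≤ (toPoly p).leadingCoeff := by
  show p - 0 ∈ nonnegCone ↔ _
  simp [nonnegCone]

lemma one_le_of_pos {p : IntPolyInf} (hp : 0 < p) : 1 ≤ p := by
  have hlc : 1 ≤ (toPoly p).leadingCoeff := Order.one_le_iff_pos.2 <|
    (nonneg_iff.1 hp.le).lt_of_ne' (by simpa using hp.ne')
  rw [← sub_nonneg, nonneg_iff, map_sub, map_one]
  exact (toPoly p).leadingCoeff_sub_one_nonneg hlc

def X : IntPolyInf := toPoly.symm Polynomial.X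

lemma X_nonneg : 0 ≤ X := nonneg_iff.2 (by simp [X])

lemma X_not_even_or_odd (y : IntPolyInf) : y + y ≠ X ∧ y + y + 1 ≠ X := by
  have coeff_one_eq {p : IntPolyInf} (h : p = X) : (toPoly p).coeff 1 = 1 := by simp [h, X]
  constructor <;> intro h <;> have := coeff_one_eq h <;>
    simp only [map_add, map_one, Polynomial.coeff_add, Polynomial.coeff_one] at this <;> omega

end IntPolyInf
end

section ModelOfPA

variable {M : Type*} [Lor.Structure M]

lemma PAminus.madd_assoc [M ⊨ PAminus] (a b c : M) : madd (madd a b) c = madd a (madd b c) := by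
  have := Theory.realize_sentence_of_mem (M := M) PAminus (by simp [PAminus] :
    ∀' ∀' ∀' (addT (addT &0 &1) &2 =' addT &0 (addT &1 &2)) ∈ PAminus)
  simpa [Sentence.Realize, Formula.Realize, Fin.snoc] using this a b c

lemma PAminus.madd_comm [M ⊨ PAminus] (a b : M) : madd a b = madd b a := by
  have := Theory.realize_sentence_of_mem (M := M) PAminus (by simp [PAminus] :
    ∀' ∀' (addT &0 &1 =' addT &1 &0) ∈ PAminus)
  simpa [Sentence.Realize, Formula.Realize, Fin.snoc] using this a b

lemma PAminus.madd_zero [M ⊨ PAminus] (a : M) : madd a (mzero M) = a := by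
  have := Theory.realize_sentence_of_mem (M := M) PAminus (by simp [PAminus] :
    ∀' (addT &0 zeroT =' &0) ∈ PAminus)
  simpa [Sentence.Realize, Formula.Realize, Fin.snoc] using this a

lemma PA.induction [M ⊨ PA] {m : ℕ} (θ : Lor.Formula (Fin m ⊕ Fin 1)) (v : Fin m → M)
    (zero : θ.Realize (Sum.elim v fun _ => mzero M))
    (succ : ∀ x, θ.Realize (Sum.elim v fun _ => x) →
      θ.Realize (Sum.elim v fun _ => madd x (mone M)))
    (x : M) : θ.Realize (Sum.elim v fun _ => x) := by
  have := Theory.realize_sentence_of_mem (M := M) PA (Set.mem_union_right _ ⟨m, θ, rfl⟩)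
  have := (realize_closeAll _ default default).1 this v
  simp only [Formula.realize_imp, Formula.realize_inf, realize_substP, realize_allX,
    realize_substX, Sum.elim_comp_inl, realize_addT, realize_zeroT, realize_oneT, xT,
    Term.realize_var, Sum.elim_inr] at this
  exact this ⟨zero, succ⟩ x

end ModelOfPA

section EvenOrOdd

variable {M : Type*} [Lor.Structure M]

def IsEvenOrOdd (x : M) : Prop := ∃ y, madd y y = x ∨ madd (madd y y) (mone M) = x

/-- `∃y (y + y = x ∨ (y + y) + 1 = x)`, where `&0` is `y` and `Sum.inl (Sum.inr 0)` is `x`. -/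
def evenOrOdd : OneVarFormula :=
  ∃' ((addT &0 &0 =' Term.var (Sum.inl (Sum.inr 0))) ⊔
    (addT (addT &0 &0) oneT =' Term.var (Sum.inl (Sum.inr 0))))

/-- `∀z (z is even or odd)`, read as a formula in `x`, which does not occur in it. -/
noncomputable def allEvenOrOdd : OneVarFormula := (allX evenOrOdd).relabel Sum.inl

lemma realize_evenOrOdd (v : Fin 0 ⊕ Fin 1 → M) :
    evenOrOdd.Realize v ↔ IsEvenOrOdd (v (Sum.inr 0)) := by
  simp [evenOrOdd, IsEvenOrOdd, Formula.Realize, Fin.snoc]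

lemma realize_allEvenOrOdd (v : Fin 0 ⊕ Fin 1 → M) :
    allEvenOrOdd.Realize v ↔ ∀ z : M, IsEvenOrOdd z := by
  simp [allEvenOrOdd, realize_allX, realize_evenOrOdd]

lemma PAminus.isEvenOrOdd_succ [M ⊨ PAminus] {x : M} (hx : IsEvenOrOdd x) :
    IsEvenOrOdd (madd x (mone M)) := by
  obtain ⟨y, rfl | rfl⟩ := hx
  · exact ⟨y, Or.inr rfl⟩
  · refine ⟨madd y (mone M), Or.inl ?_⟩
    simp only [PAminus.madd_assoc, PAminus.madd_comm (mone M)]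

theorem PA_models_allEvenOrOdd : PA ⊨ᵇ allS allEvenOrOdd := by
  intro M v xs
  have : M ⊨ PAminus := M.is_model.mono Set.subset_union_left
  refine (realize_closeAll _ v xs).2 fun w => (realize_allX _ w).2 fun _ =>
    (realize_allEvenOrOdd _).2 fun z => ?_
  refine (realize_evenOrOdd _).1 (PA.induction evenOrOdd w ?_ ?_ z)
  · exact (realize_evenOrOdd _).2 ⟨mzero M, Or.inl (PAminus.madd_zero _)⟩
  · exact fun x hx =>
      (realize_evenOrOdd _).2 (PAminus.isEvenOrOdd_succ ((realize_evenOrOdd _).1 hx))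

end EvenOrOdd

theorem not_PAminus_models_allEvenOrOdd :
    ¬ PAminus ⊨ᵇ closeAll (substP allEvenOrOdd zeroT) := by
  let M := {p : IntPolyInf // 0 ≤ p}
  let := canonicalLorStructure M
  have : M ⊨ PAminus := model_PAminus_of_one_le_of_pos M fun x hx => IntPolyInf.one_le_of_pos hx
  intro h
  have := (realize_closeAll _ default default).1 (h (.of PAminus M) default default) default
  rw [realize_substP, realize_allEvenOrOdd] at this
  obtain ⟨y, hy | hy⟩ := this ⟨IntPolyInf.X, IntPolyInf.X_nonneg⟩
  · exact (IntPolyInf.X_not_even_or_odd y.1).1 (congrArg Subtype.val hy)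
  · exact (IntPolyInf.X_not_even_or_odd y.1).2 (congrArg Subtype.val hy)

/-- There is an `L_OR` formula `ψ(x)` such that `PA ⊢ ∀x ψ(x)`, but no inductive
formula `φ(x)` satisfies `PA⁻ ⊢ ∀x(φ(x) → ψ(x))`. -/
theorem stmt4 :
    ∃ ψ : OneVarFormula, PA ⊨ᵇ allS ψ ∧
      ¬∃ φ : OneVarFormula, IsInductive φ ∧ PAminus ⊨ᵇ closeAll (allX (φ ⟹ ψ)) := by
  refine ⟨allEvenOrOdd, PA_models_allEvenOrOdd, ?_⟩
  rintro ⟨φ, hφ, himp⟩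
  exact not_PAminus_models_allEvenOrOdd (models_closeAll_substP_of_imp hφ.1 himp)
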